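/- arXiv:1404.3745 — 3 statements merged into one kernel-verified Lean document; each statement's English description precedes it below -/
import Mathlib

section
/- The equation log 2 = ψ(1 - 2p) + 2ψ(p), where ψ(x) = -x log x, has a unique solution p in the open interval (0, 1/2). -/
/-!
The right-hand side `f p = ψ (1 - 2p) + 2 ψ p` is the entropy of the distribution `(p, p, 1 - 2p)`,
a strictly concave function on `[0, 1/2]` with `f 0 = 0 < log 2 < log 3 = f (1/3)`, so the
intermediate value theorem yields a solution in `(0, 1/3)`. Since `f (1/2) = log 2` as well, strict
concavity leaves room for at most one more point of `[0, 1/2)` at which `f` takes the value `log 2`.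
-/

noncomputable def ψ (x : ℝ) : ℝ := -x * Real.log x

open Real Set

section

variable {𝕜 β : Type*} [Field 𝕜] [LinearOrder 𝕜] [IsStrictOrderedRing 𝕜]
  [AddCommMonoid β] [LinearOrder β] [IsOrderedAddMonoid β] [Module 𝕜 β] [PosSMulStrictMono 𝕜 β]
  {s : Set 𝕜} {f : 𝕜 → β}

theorem StrictConcaveOn.lt_of_apply_eq_of_mem_Ioo (hf : StrictConcaveOn 𝕜 s f) {x y z : 𝕜}
    (hx : x ∈ s) (hz : z ∈ s) (hfxz : f x = f z) (hy : y ∈ Ioo x z) : f x < f y := by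
  have hxz : x < z := hy.1.trans hy.2
  simpa [hfxz] using hf.lt_on_openSegment hx hz hxz.ne (by rwa [openSegment_eq_Ioo hxz])

theorem StrictConcaveOn.eq_of_apply_eq_of_lt (hf : StrictConcaveOn 𝕜 s f) {x y z : 𝕜}
    (hx : x ∈ s) (hy : y ∈ s) (hz : z ∈ s) (hxz : x < z) (hyz : y < z)
    (hfx : f x = f z) (hfy : f y = f z) : x = y := by
  by_contra hne
  rcases lt_or_gt_of_ne hne with hxy | hyx
  · exact (hf.lt_of_apply_eq_of_mem_Ioo hx hz hfx ⟨hxy, hyz⟩).ne (hfx.trans hfy.symm)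
  · exact (hf.lt_of_apply_eq_of_mem_Ioo hy hz hfy ⟨hyx, hxz⟩).ne (hfy.trans hfx.symm)

end

noncomputable def symmTernaryEntropy (p : ℝ) : ℝ := negMulLog (1 - 2 * p) + 2 * negMulLog p

theorem continuous_symmTernaryEntropy : Continuous symmTernaryEntropy := by
  unfold symmTernaryEntropy; fun_prop

theorem strictConcaveOn_symmTernaryEntropy :
    StrictConcaveOn ℝ (Icc 0 (1 / 2)) symmTernaryEntropy := by
  have hlin : ConcaveOn ℝ (Icc 0 (1 / 2)) fun p : ℝ => negMulLog (1 - 2 * p) := by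
    have h := concaveOn_negMulLog.comp_affineMap (AffineMap.lineMap (1 : ℝ) (-1))
    refine (h.subset (fun p hp => ?_) (convex_Icc _ _)).congr fun p _ => ?_
    · simp only [mem_preimage, AffineMap.lineMap_apply_ring', mem_Ici]
      linarith [hp.2]
    · simp only [Function.comp_apply, AffineMap.lineMap_apply_ring']
      ring_nf
  have hlog : StrictConcaveOn ℝ (Icc 0 (1 / 2)) fun p : ℝ => negMulLog p + negMulLog p :=
    (strictConcaveOn_negMulLog.add strictConcaveOn_negMulLog).subset Icc_subset_Ici_self
      (convex_Icc _ _)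
  exact (hlin.add_strictConcaveOn hlog).congr fun p _ => by simp [symmTernaryEntropy, two_mul]

theorem symmTernaryEntropy_zero : symmTernaryEntropy 0 = 0 := by
  simp [symmTernaryEntropy]

theorem symmTernaryEntropy_half : symmTernaryEntropy (1 / 2) = log 2 := by
  norm_num [symmTernaryEntropy, negMulLog]
  rw [one_div, log_inv]
  ring

theorem symmTernaryEntropy_third : symmTernaryEntropy (1 / 3) = log 3 := by
  norm_num [symmTernaryEntropy, negMulLog]
  rw [one_div, log_inv]
  ring

theorem unique_solution_log2 :
    ∃! p : ℝ, p ∈ Set.Ioo (0 : ℝ) (1/2) ∧ Real.log 2 = ψ (1 - 2*p) + 2 * ψ p := by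
  change ∃! p : ℝ, p ∈ Ioo 0 (1 / 2) ∧ log 2 = symmTernaryEntropy p
  obtain ⟨p, hp, hfp⟩ : ∃ p ∈ Ioo (0 : ℝ) (1 / 3), symmTernaryEntropy p = log 2 := by
    refine intermediate_value_Ioo (by norm_num) continuous_symmTernaryEntropy.continuousOn ?_
    rw [symmTernaryEntropy_zero, symmTernaryEntropy_third]
    exact ⟨log_pos one_lt_two, log_lt_log two_pos (by norm_num)⟩
  have hp_lt_half : p < 1 / 2 := hp.2.trans (by norm_num)
  refine ⟨p, ⟨⟨hp.1, hp_lt_half⟩, hfp.symm⟩, fun q ⟨hq, hfq⟩ => ?_⟩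
  exact strictConcaveOn_symmTernaryEntropy.eq_of_apply_eq_of_lt (Ioo_subset_Icc_self hq)
    ⟨hp.1.le, hp_lt_half.le⟩ (right_mem_Icc.2 (by norm_num)) hq.2 hp_lt_half
    (symmTernaryEntropy_half ▸ hfq.symm) (symmTernaryEntropy_half ▸ hfp)
end

section
/- The equation 2ψ(2p) + ψ(1-4p) = ψ(1-2p) + 2ψ(p), where ψ(x) = -x log x, has a unique solution p in the open interval (0, 1/4). -/
open Real Set

/-!
Let `f(p) = 2ψ(2p) + ψ(1-4p) - ψ(1-2p) - 2ψ(p)`. For `p > 0` one has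
`f(p) = 2p log((1-4p)/(4p)) + (1-2p) log((1-2p)/(1-4p))`, so `f > 0` on `(0, 1/8]`, while
`f(1/4) = ½ log ½ < 0`. On `[1/8, 1/4]` the derivative
`f'(p) = -4 log 2 - 2 log p + 4 log(1-4p) - 2 log(1-2p)` is negative, because there
`log p > -3 log 2` and `log(1-4p) < -log 2 < log(1-2p)`.
-/

theorem existsUnique_zero_of_pos_of_strictAntiOn {f : ℝ → ℝ} {a b c : ℝ}
    (hac : a < c) (hcb : c < b) (hpos : ∀ x ∈ Ioc a c, 0 < f x) (hcont : ContinuousOn f (Icc c b))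
    (hanti : StrictAntiOn f (Icc c b)) (hb : f b < 0) :
    ∃! x, x ∈ Ioo a b ∧ f x = 0 := by
  have hroot_gt : ∀ x ∈ Ioo a b, f x = 0 → c < x := fun x hx hfx ↦
    not_le.1 fun hxc ↦ (hpos x ⟨hx.1, hxc⟩).ne' hfx
  obtain ⟨x, hx, hfx⟩ := intermediate_value_Ioo' hcb.le hcont
    ⟨hb, hpos c ⟨hac, le_rfl⟩⟩
  refine ⟨x, ⟨⟨hac.trans hx.1, hx.2⟩, hfx⟩, fun y ⟨hy, hfy⟩ ↦ ?_⟩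
  exact hanti.injOn ⟨(hroot_gt y hy hfy).le, hy.2.le⟩ ⟨hx.1.le, hx.2.le⟩ (hfy.trans hfx.symm)

theorem hasDerivAt_psi_comp {g : ℝ → ℝ} {g' x : ℝ} (hg : HasDerivAt g g' x) (hx : g x ≠ 0) :
    HasDerivAt (fun y ↦ ψ (g y)) ((-log (g x) - 1) * g') x :=
  (hasDerivAt_negMulLog hx).comp x hg

noncomputable def psiDefect (p : ℝ) : ℝ := 2 * ψ (2 * p) + ψ (1 - 4 * p) - ψ (1 - 2 * p) - 2 * ψ p

theorem continuous_psiDefect : Continuous psiDefect := by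
  have hψ : ψ = negMulLog := rfl
  unfold psiDefect
  rw [hψ]
  fun_prop

theorem psiDefect_eq_mul_log_sub {p : ℝ} (hp : 0 < p) :
    psiDefect p = 2 * p * (log (1 - 4 * p) - log (4 * p))
      + (1 - 2 * p) * (log (1 - 2 * p) - log (1 - 4 * p)) := by
  have h2 : log (2 * p) = log 2 + log p := log_mul two_ne_zero hp.ne'
  have h4 : log (4 * p) = 2 * log 2 + log p := by
    rw [show (4 : ℝ) * p = 2 * (2 * p) by ring, log_mul two_ne_zero (by positivity), h2]
    ring
  simp only [psiDefect, ψ, h2, h4]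
  ring

theorem psiDefect_pos {p : ℝ} (hp : 0 < p) (hp8 : p ≤ 1 / 8) : 0 < psiDefect p := by
  rw [psiDefect_eq_mul_log_sub hp]
  have hfirst : 0 ≤ log (1 - 4 * p) - log (4 * p) :=
    sub_nonneg.2 (log_le_log (by positivity) (by linarith))
  have hsecond : 0 < log (1 - 2 * p) - log (1 - 4 * p) :=
    sub_pos.2 (log_lt_log (by linarith) (by linarith))
  have := mul_nonneg (by positivity : (0 : ℝ) ≤ 2 * p) hfirst
  have := mul_pos (by linarith : (0 : ℝ) < 1 - 2 * p) hsecond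
  linarith

theorem psiDefect_quarter_neg : psiDefect (1 / 4) < 0 := by
  -- the identity still holds at `p = 1/4`, with `log 0 = 0` matching `ψ 0 = 0`
  rw [psiDefect_eq_mul_log_sub (by norm_num)]
  norm_num
  exact mul_neg_of_pos_of_neg (by norm_num) (log_neg (by norm_num) (by norm_num))

theorem hasDerivAt_psiDefect {p : ℝ} (hp : p ∈ Ioo (0 : ℝ) (1 / 4)) :
    HasDerivAt psiDefect
      (-4 * log 2 - 2 * log p + 4 * log (1 - 4 * p) - 2 * log (1 - 2 * p)) p := by
  obtain ⟨hp0, hp4⟩ := hp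
  have hid := hasDerivAt_id' p
  have d1 := hasDerivAt_psi_comp (hid.const_mul 2) (by positivity)
  have d2 := hasDerivAt_psi_comp ((hid.const_mul 4).const_sub 1) (by linarith)
  have d3 := hasDerivAt_psi_comp ((hid.const_mul 2).const_sub 1) (by linarith)
  have d4 := hasDerivAt_psi_comp hid hp0.ne'
  refine (((d1.const_mul 2).add d2).sub d3).sub (d4.const_mul 2) |>.congr_deriv ?_
  rw [log_mul two_ne_zero hp0.ne']
  ring

theorem psiDefect_strictAntiOn : StrictAntiOn psiDefect (Icc (1 / 8) (1 / 4)) := by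
  refine strictAntiOn_of_deriv_neg (convex_Icc _ _) continuous_psiDefect.continuousOn ?_
  rw [interior_Icc]
  rintro p ⟨hp8, hp4⟩
  rw [(hasDerivAt_psiDefect ⟨by linarith, hp4⟩).deriv]
  have hlog8 : log (1 / 8 : ℝ) = -(3 * log 2) := by
    rw [show (1 / 8 : ℝ) = (2 ^ 3)⁻¹ by norm_num, log_inv, log_pow]
    push_cast
    ring
  have hlog2 : log (1 / 2 : ℝ) = -log 2 := by rw [one_div, log_inv]
  have h1 : log (1 / 8 : ℝ) < log p := log_lt_log (by norm_num) hp8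
  have h2 : log (1 - 4 * p) < log (1 / 2 : ℝ) := log_lt_log (by linarith) (by linarith)
  have h3 : log (1 / 2 : ℝ) < log (1 - 2 * p) := log_lt_log (by norm_num) (by linarith)
  linarith

theorem unique_solution_quarter :
    ∃! p : ℝ, p ∈ Set.Ioo (0 : ℝ) (1/4) ∧
      2 * ψ (2*p) + ψ (1 - 4*p) = ψ (1 - 2*p) + 2 * ψ p := by
  have key := existsUnique_zero_of_pos_of_strictAntiOn (by norm_num) (by norm_num)
    (fun p hp ↦ psiDefect_pos hp.1 hp.2) continuous_psiDefect.continuousOn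
    psiDefect_strictAntiOn psiDefect_quarter_neg
  simpa only [psiDefect, sub_sub, sub_eq_zero] using key
end

section
/- There exist a finite set G ⊂ ℝ² on which π_{-1}(a,b) = a-b is injective and a probability measure P on G such that H(P) / max(H(π₀P), H(π₁P), H(π_∞P)) > log(27)/log(27/4). -/
open Finset
open scoped Classical

noncomputable def pushEnt (G : Finset (ℝ × ℝ)) (P : ℝ × ℝ → ℝ) (π : ℝ × ℝ → ℝ) : ℝ :=
  -∑ ν ∈ G.image π, (∑ g ∈ G.filter (fun g => π g = ν), P g) *
      Real.log (∑ g ∈ G.filter (fun g => π g = ν), P g)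

noncomputable def ent (G : Finset (ℝ × ℝ)) (P : ℝ × ℝ → ℝ) : ℝ :=
  -∑ g ∈ G, P g * Real.log (P g)

def π₀ : ℝ × ℝ → ℝ := fun x => x.1
def π₁ : ℝ × ℝ → ℝ := fun x => x.1 + x.2
def π₂ : ℝ × ℝ → ℝ := fun x => x.1 + 2 * x.2
def πinf : ℝ × ℝ → ℝ := fun x => x.2

/-!
Take `G = {(0,1), (1,0), (1,1), (2,0)}` with weights `(p, 1/2 - p, 1/2 - p, p)` for the rational
`p = 1/9`, slightly below the optimal `p` of the paper. The fibres of `π₁` and of `π_∞` both have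
mass `1/2`, so those projections have entropy `log 2`; `π₀` has fibre masses `(1/9, 7/9, 1/9)`,
whose entropy is still at most `log 2` because `9⁹ ≤ 2⁹ 7⁷`. Meanwhile `H(P) > (7/4) log 2`
and `log 27 / log (27/4) < 7/4`. Each of these logarithmic inequalities is a comparison of
integer powers.
-/

open Real

lemma pushEnt_eq_sum_mul_log_fiber (G : Finset (ℝ × ℝ)) (P f : ℝ × ℝ → ℝ) :
    pushEnt G P f = -∑ g ∈ G, P g * log (∑ h ∈ G with f h = f g, P h) := by
  rw [pushEnt, ← sum_fiberwise_of_maps_to (fun g hg => mem_image_of_mem f hg)]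
  congr 1
  refine sum_congr rfl fun ν _ => ?_
  rw [sum_mul]
  refine sum_congr rfl fun g hg => ?_
  rw [(mem_filter.1 hg).2]

lemma log_27_div_log_27_div_4_lt : log 27 / log (27/4) < 7/4 := by
  have h : log ((4:ℝ) ^ 7) < log ((27:ℝ) ^ 3) := log_lt_log (by norm_num) (by norm_num)
  rw [log_pow, log_pow] at h
  push_cast at h
  rw [div_lt_iff₀ (log_pos (by norm_num)), log_div (by norm_num) (by norm_num)]
  linarith

noncomputable def witness : Finset (ℝ × ℝ) := {(0, 1), (1, 0), (1, 1), (2, 0)}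

noncomputable def witnessProb (x : ℝ × ℝ) : ℝ := if x.1 = 1 then 7/18 else 1/9

lemma injOn_sub_witness :
    Set.InjOn (fun x : ℝ × ℝ => x.1 - x.2) (witness : Set (ℝ × ℝ)) := by
  simp only [witness, coe_insert, coe_singleton, Set.InjOn, Set.mem_insert_iff,
    Set.mem_singleton_iff]
  rintro x (rfl | rfl | rfl | rfl) y (rfl | rfl | rfl | rfl) h <;>
    first | rfl | norm_num at h

lemma witnessProb_nonneg (x : ℝ × ℝ) : 0 ≤ witnessProb x := by
  unfold witnessProb
  split_ifs <;> norm_num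

lemma sum_witnessProb : ∑ g ∈ witness, witnessProb g = 1 := by
  norm_num [witness, witnessProb, Prod.ext_iff]

lemma ent_witness : ent witness witnessProb = 2/9 * log 9 + 7/9 * log (18/7) := by
  simp [ent, witness, witnessProb, Prod.ext_iff]
  rw [show (7/18 : ℝ) = (18/7)⁻¹ by norm_num, log_inv]
  ring

lemma pushEnt_π₀_witness :
    pushEnt witness witnessProb π₀ = 2/9 * log 9 + 7/9 * log (9/7) := by
  rw [pushEnt_eq_sum_mul_log_fiber]
  simp only [sum_filter]
  norm_num [witness, π₀, witnessProb, Prod.ext_iff]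
  simp only [one_div, log_inv]
  rw [show (7/9 : ℝ) = (9/7)⁻¹ by norm_num, log_inv]
  ring

lemma pushEnt_π₁_witness : pushEnt witness witnessProb π₁ = log 2 := by
  rw [pushEnt_eq_sum_mul_log_fiber]
  simp only [sum_filter]
  norm_num [witness, π₁, witnessProb, Prod.ext_iff]
  simp only [one_div, log_inv]
  ring

lemma pushEnt_πinf_witness : pushEnt witness witnessProb πinf = log 2 := by
  rw [pushEnt_eq_sum_mul_log_fiber]
  simp only [sum_filter]
  norm_num [witness, πinf, witnessProb, Prod.ext_iff]
  simp only [one_div, log_inv]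
  ring

lemma pushEnt_π₀_witness_le_log_two : pushEnt witness witnessProb π₀ ≤ log 2 := by
  have h : log ((9:ℝ) ^ 2 * (9/7) ^ 7) ≤ log ((2:ℝ) ^ 9) :=
    log_le_log (by norm_num) (by norm_num)
  rw [log_mul (by norm_num) (by norm_num), log_pow, log_pow, log_pow] at h
  push_cast at h
  rw [pushEnt_π₀_witness]
  linarith

lemma seven_fourths_mul_log_two_lt_ent_witness : 7/4 * log 2 < ent witness witnessProb := by
  have h : log ((2:ℝ) ^ 63) < log ((9:ℝ) ^ 8 * (18/7) ^ 28) :=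
    log_lt_log (by norm_num) (by norm_num)
  rw [log_mul (by norm_num) (by norm_num), log_pow, log_pow, log_pow] at h
  push_cast at h
  rw [ent_witness]
  linarith

theorem counterexample_beats_ruzsa :
    ∃ (G : Finset (ℝ × ℝ)) (P : ℝ × ℝ → ℝ),
      Set.InjOn (fun x : ℝ × ℝ => x.1 - x.2) (G : Set (ℝ × ℝ)) ∧
      (∀ g ∈ G, 0 ≤ P g) ∧ (∑ g ∈ G, P g = 1) ∧
      ent G P / max (max (pushEnt G P π₀) (pushEnt G P π₁)) (pushEnt G P πinf)
        > Real.log 27 / Real.log (27/4) := by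
  refine ⟨witness, witnessProb, injOn_sub_witness, fun g _ => witnessProb_nonneg g,
    sum_witnessProb, ?_⟩
  have hlog2 : 0 < log 2 := log_pos one_lt_two
  rw [pushEnt_π₁_witness, pushEnt_πinf_witness,
    max_eq_right pushEnt_π₀_witness_le_log_two, max_self, gt_iff_lt, lt_div_iff₀ hlog2]
  calc log 27 / log (27/4) * log 2 < 7/4 * log 2 :=
        mul_lt_mul_of_pos_right log_27_div_log_27_div_4_lt hlog2
    _ < ent witness witnessProb := seven_fourths_mul_log_two_lt_ent_witness
end
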